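/- arXiv:2305.05632 — 7 statements merged into one kernel-verified Lean document; each statement's English description precedes it below -/
import Mathlib

section
/- For n ≥ 2, Sp(n;2,3) = [0, 2^n] \ ({0} ∪ {2^d : 0 ≤ d ≤ n}); that is, a nonempty subset S of F_2^n fails to induce a 2-flat containing exactly 3 points of S if and only if S is an affine subspace of F_2^n, equivalently |S| ∈ Sp(n;2,3) exactly when |S| is nonzero and not a power of 2. -/
def IsFlat (n k : ℕ) (H : Set (Fin n → ZMod 2)) : Prop :=
  ∃ (x : Fin n → ZMod 2) (W : Submodule (ZMod 2) (Fin n → ZMod 2)),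
    Module.finrank (ZMod 2) W = k ∧ H = (fun w => x + w) '' (W : Set (Fin n → ZMod 2))

def Forces (n k t m : ℕ) : Prop :=
  ∀ S : Set (Fin n → ZMod 2), S.ncard = m →
    ∃ H : Set (Fin n → ZMod 2), IsFlat n k H ∧ (H ∩ S).ncard = t

def Sp (n k t : ℕ) : Set ℕ := {m | m ≤ 2 ^ n ∧ Forces n k t m}

/-!
Over `ZMod 2` the affine plane through three distinct points `a`, `b`, `c` is
`{a, b, c, a + b + c}`. Hence `S` induces a `[2,3]`-flat exactly when some `a + b + c` with
`a, b, c ∈ S` lies outside `S`. Sets closed under `(a, b, c) ↦ a + b + c` are stable under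
intersection and never have exactly three elements, and the nonempty ones are precisely the affine
subspaces, whose sizes are the powers `2 ^ d` with `d ≤ n`.
-/

open Module Submodule

theorem ZMod.eq_zero_or_eq_one_of_two (c : ZMod 2) : c = 0 ∨ c = 1 := by
  revert c; decide

theorem finrank_span_pair_eq_two {K M : Type*} [Ring K] [Nontrivial K] [StrongRankCondition K]
    [AddCommGroup M] [Module K M] {u v : M} (h : LinearIndependent K ![u, v]) :
    finrank K (span K {u, v}) = 2 := by
  rw [← Matrix.range_cons_cons_empty u v ![], finrank_span_eq_card h, Fintype.card_fin]

/-- Over `ZMod 2`, `a + b + c` is the fourth point of the affine plane through `a`, `b`, `c`. -/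
def ThreeSumClosed {V : Type*} [Add V] (S : Set V) : Prop :=
  ∀ a ∈ S, ∀ b ∈ S, ∀ c ∈ S, a + b + c ∈ S

theorem ThreeSumClosed.inter {V : Type*} [Add V] {S T : Set V} (hS : ThreeSumClosed S)
    (hT : ThreeSumClosed T) : ThreeSumClosed (S ∩ T) :=
  fun a ha b hb c hc => ⟨hS a ha.1 b hb.1 c hc.1, hT a ha.2 b hb.2 c hc.2⟩

section ZModTwo

variable {V : Type*} [AddCommGroup V] [Module (ZMod 2) V]

theorem ZModModule.add_eq_zero_iff_eq {a b : V} : a + b = 0 ↔ a = b := by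
  rw [← ZModModule.sub_eq_add, sub_eq_zero]

theorem ZModModule.span_pair_eq (u v : V) :
    (span (ZMod 2) {u, v} : Set V) = {0, u, v, u + v} := by
  ext w
  simp only [SetLike.mem_coe, mem_span_pair, Set.mem_insert_iff, Set.mem_singleton_iff]
  constructor
  · rintro ⟨s, t, rfl⟩
    obtain rfl | rfl := s.eq_zero_or_eq_one_of_two <;>
      obtain rfl | rfl := t.eq_zero_or_eq_one_of_two <;> simp
  · rintro (rfl | rfl | rfl | rfl)
    exacts [⟨0, 0, by simp⟩, ⟨1, 0, by simp⟩, ⟨0, 1, by simp⟩, ⟨1, 1, by simp⟩]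

theorem ZModModule.linearIndependent_pair {u v : V} (hu : u ≠ 0) (hv : v ≠ 0) (huv : u ≠ v) :
    LinearIndependent (ZMod 2) ![u, v] := by
  rw [LinearIndependent.pair_iff]
  intro s t hst
  obtain rfl | rfl := s.eq_zero_or_eq_one_of_two <;>
    obtain rfl | rfl := t.eq_zero_or_eq_one_of_two <;>
    simp_all [ZModModule.add_eq_zero_iff_eq]

theorem ZModModule.image_add_span_pair (a b c : V) :
    (a + ·) '' (span (ZMod 2) {a + b, a + c} : Set V) = {a, b, c, a + b + c} := by
  simp only [ZModModule.span_pair_eq, Set.image_insert_eq, Set.image_singleton, add_zero,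
    ← add_assoc, ZModModule.add_self, zero_add]
  rw [add_comm b a]

theorem Submodule.ncard_eq_two_pow_finrank [Module.Finite (ZMod 2) V] (W : Submodule (ZMod 2) V) :
    (W : Set V).ncard = 2 ^ finrank (ZMod 2) W := by
  rw [← Nat.card_coe_set_eq, SetLike.coe_sort_coe, Module.natCard_eq_pow_finrank (K := ZMod 2),
    Nat.card_zmod]

theorem ncard_image_add_submodule [Module.Finite (ZMod 2) V] (x : V) (W : Submodule (ZMod 2) V) :
    ((x + ·) '' (W : Set V)).ncard = 2 ^ finrank (ZMod 2) W := by
  rw [Set.ncard_image_of_injective _ (add_right_injective x), W.ncard_eq_two_pow_finrank]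

namespace ThreeSumClosed

variable {S : Set V}

theorem submodule (W : Submodule (ZMod 2) V) : ThreeSumClosed (W : Set V) :=
  fun _ ha _ hb _ hc => W.add_mem (W.add_mem ha hb) hc

theorem image_add (hS : ThreeSumClosed S) (x : V) : ThreeSumClosed ((x + ·) '' S) := by
  rintro _ ⟨a, ha, rfl⟩ _ ⟨b, hb, rfl⟩ _ ⟨c, hc, rfl⟩
  refine ⟨a + b + c, hS a ha b hb c hc, ?_⟩
  have : x + a + (x + b) + (x + c) = (x + x) + (x + (a + b + c)) := by abel
  rw [this, ZModModule.add_self, zero_add]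

theorem ncard_ne_three (hS : ThreeSumClosed S) : S.ncard ≠ 3 := by
  intro h3
  obtain ⟨a, b, c, hab, hac, hbc, rfl⟩ := Set.ncard_eq_three.mp h3
  have habc := hS a (by simp) b (by simp) c (by simp)
  simp only [Set.mem_insert_iff, Set.mem_singleton_iff] at habc
  rcases habc with h | h | h
  · rw [add_assoc, add_eq_left, ZModModule.add_eq_zero_iff_eq] at h
    exact hbc h
  · rw [add_right_comm, add_eq_right, ZModModule.add_eq_zero_iff_eq] at h
    exact hac h
  · rw [add_eq_right, ZModModule.add_eq_zero_iff_eq] at h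
    exact hab h

theorem exists_eq_image_add_submodule (hS : ThreeSumClosed S) (hne : S.Nonempty) :
    ∃ (x : V) (W : Submodule (ZMod 2) V), S = (fun w => x + w) '' (W : Set V) := by
  obtain ⟨x, hx⟩ := hne
  have hx_add {w : V} : x + (x + w) = w := by rw [← add_assoc, ZModModule.add_self, zero_add]
  let W : Submodule (ZMod 2) V :=
    { carrier := {w | x + w ∈ S}
      zero_mem' := by simpa using hx
      add_mem' := fun {a b} ha hb => by
        have h := hS _ ha _ hb _ hx
        rwa [show x + a + (x + b) + x = x + (a + b) + (x + x) by abel, ZModModule.add_self,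
          add_zero] at h
      smul_mem' := fun c w hw => by
        obtain rfl | rfl := c.eq_zero_or_eq_one_of_two
        · simpa using hx
        · simpa using hw }
  refine ⟨x, W, Set.ext fun s => ⟨fun hs => ⟨x + s, ?_, hx_add⟩, ?_⟩⟩
  · show x + (x + s) ∈ S
    rwa [hx_add]
  · rintro ⟨w, hw, rfl⟩
    exact hw

end ThreeSumClosed

theorem threeSumClosed_iff_exists_eq_image_add_submodule {S : Set V} (hne : S.Nonempty) :
    ThreeSumClosed S ↔
      ∃ (x : V) (W : Submodule (ZMod 2) V), S = (fun w => x + w) '' (W : Set V) := by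
  refine ⟨fun hS => hS.exists_eq_image_add_submodule hne, ?_⟩
  rintro ⟨x, W, rfl⟩
  exact (ThreeSumClosed.submodule W).image_add x

theorem exists_threeSumClosed_ncard_eq_iff [Module.Finite (ZMod 2) V] {m : ℕ} :
    (∃ S : Set V, ThreeSumClosed S ∧ S.ncard = m) ↔
      m = 0 ∨ ∃ d ≤ finrank (ZMod 2) V, m = 2 ^ d := by
  constructor
  · rintro ⟨S, hS, rfl⟩
    obtain rfl | hne := S.eq_empty_or_nonempty
    · exact Or.inl (Set.ncard_empty V)
    obtain ⟨x, W, rfl⟩ := hS.exists_eq_image_add_submodule hne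
    exact Or.inr ⟨_, W.finrank_le, ncard_image_add_submodule x W⟩
  · rintro (rfl | ⟨d, hd, rfl⟩)
    · exact ⟨∅, fun a ha => ha.elim, Set.ncard_empty V⟩
    obtain ⟨f, hf⟩ := exists_linearIndependent_of_le_finrank hd
    refine ⟨_, ThreeSumClosed.submodule (span (ZMod 2) (Set.range f)), ?_⟩
    rw [Submodule.ncard_eq_two_pow_finrank, finrank_span_eq_card hf, Fintype.card_fin]

end ZModTwo

theorem exists_isFlat_two_ncard_inter_eq_three {n : ℕ} {S : Set (Fin n → ZMod 2)}
    (hS : ¬ ThreeSumClosed S) : ∃ H, IsFlat n 2 H ∧ (H ∩ S).ncard = 3 := by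
  simp only [ThreeSumClosed, not_forall] at hS
  obtain ⟨a, ha, b, hb, c, hc, hd⟩ := hS
  have hab : a ≠ b := by rintro rfl; simp [ZModModule.add_self, hc] at hd
  have hac : a ≠ c := by rintro rfl; simp [add_right_comm, ZModModule.add_self, hb] at hd
  have hbc : b ≠ c := by rintro rfl; simp [add_assoc, ZModModule.add_self, ha] at hd
  have hli : LinearIndependent (ZMod 2) ![a + b, a + c] :=
    ZModModule.linearIndependent_pair (ZModModule.add_eq_zero_iff_eq.not.mpr hab)
      (ZModModule.add_eq_zero_iff_eq.not.mpr hac) ((add_right_injective a).ne hbc)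
  refine ⟨_, ⟨a, _, finrank_span_pair_eq_two hli, rfl⟩, ?_⟩
  rw [ZModModule.image_add_span_pair, Set.insert_inter_of_mem ha, Set.insert_inter_of_mem hb,
    Set.insert_inter_of_mem hc, Set.singleton_inter_eq_empty.mpr hd, ← Set.singleton_def]
  exact Set.ncard_eq_three.mpr ⟨a, b, c, hab, hac, hbc, rfl⟩

theorem not_exists_isFlat_two_ncard_inter_eq_three_iff {n : ℕ} {S : Set (Fin n → ZMod 2)} :
    (¬ ∃ H, IsFlat n 2 H ∧ (H ∩ S).ncard = 3) ↔ ThreeSumClosed S := by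
  refine ⟨not_imp_comm.mp exists_isFlat_two_ncard_inter_eq_three, ?_⟩
  rintro hS ⟨H, ⟨x, W, -, rfl⟩, h3⟩
  exact (((ThreeSumClosed.submodule W).image_add x).inter hS).ncard_ne_three h3

theorem forces_two_three_iff {n m : ℕ} :
    Forces n 2 3 m ↔ ¬ (m = 0 ∨ ∃ d ≤ n, m = 2 ^ d) := by
  have hdim := exists_threeSumClosed_ncard_eq_iff (V := Fin n → ZMod 2) (m := m)
  rw [Module.finrank_fin_fun] at hdim
  rw [← hdim, Forces, not_exists]
  refine forall_congr' fun S => ?_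
  rw [← not_exists_isFlat_two_ncard_inter_eq_three_iff, not_and, not_imp_not]

theorem stmt_3_general (n : ℕ) :
    Sp n 2 3 = Set.Icc 0 (2 ^ n) \ ({0} ∪ {x | ∃ d ≤ n, x = 2 ^ d}) ∧
    (∀ S : Set (Fin n → ZMod 2), S.Nonempty →
      ((¬ ∃ H : Set (Fin n → ZMod 2), IsFlat n 2 H ∧ (H ∩ S).ncard = 3) ↔
        ∃ (x : Fin n → ZMod 2) (W : Submodule (ZMod 2) (Fin n → ZMod 2)),
          S = (fun w => x + w) '' (W : Set (Fin n → ZMod 2)))) := by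
  refine ⟨?_, fun S hS => not_exists_isFlat_two_ncard_inter_eq_three_iff.trans
    (threeSumClosed_iff_exists_eq_image_add_submodule hS)⟩
  ext m
  simp only [Sp, forces_two_three_iff, Set.mem_ofPred_eq, Set.mem_sdiff, Set.mem_Icc,
    Set.mem_union, Set.mem_singleton_iff, zero_le, true_and]

theorem stmt_3 (n : ℕ) (hn : 2 ≤ n) :
    Sp n 2 3 = Set.Icc 0 (2 ^ n) \ ({0} ∪ {x | ∃ d ≤ n, x = 2 ^ d}) ∧
    (∀ S : Set (Fin n → ZMod 2), S.Nonempty →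
      ((¬ ∃ H : Set (Fin n → ZMod 2), IsFlat n 2 H ∧ (H ∩ S).ncard = 3) ↔
        ∃ (x : Fin n → ZMod 2) (W : Submodule (ZMod 2) (Fin n → ZMod 2)),
          S = (fun w => x + w) '' (W : Set (Fin n → ZMod 2)))) :=
  stmt_3_general n
end

section
/- For n ≥ 2, Sp(n;2,2) = [2, 2^n - 2]: every subset S ⊆ F_2^n with 2 ≤ |S| ≤ 2^n - 2 contains a 2-dimensional affine subspace meeting S in exactly 2 points, and no set of size < 2 or > 2^n - 2 does. -/
section aux

variable {n : ℕ}

lemma vadd_self (v : Fin n → ZMod 2) : v + v = 0 := by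
  funext i; exact CharTwo.add_self_eq_zero _

lemma natcard_space : Nat.card (Fin n → ZMod 2) = 2 ^ n := by
  simp [Nat.card_eq_fintype_card]

lemma flat_ncard {k : ℕ} {H : Set (Fin n → ZMod 2)} (h : IsFlat n k H) :
    H.ncard = 2 ^ k := by
  obtain ⟨x, W, hr, rfl⟩ := h
  have hinj : Function.Injective (fun w : Fin n → ZMod 2 => x + w) :=
    fun u v huv => by simpa using huv
  rw [Set.ncard_image_of_injective _ hinj, ← Nat.card_coe_set_eq]
  have : Fintype W := Fintype.ofFinite _
  rw [show (Nat.card (W : Set (Fin n → ZMod 2))) = Nat.card W from rfl,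
    Nat.card_eq_fintype_card, Module.card_eq_pow_finrank (K := ZMod 2), hr]
  simp

/-- Given a pair in `S` and a pair outside `S` with the same difference,
we get a 2-flat meeting `S` in exactly 2 points. -/
lemma flat_of_pairs {S : Set (Fin n → ZMod 2)} {a b c e : Fin n → ZMod 2}
    (ha : a ∈ S) (hb : b ∈ S) (hc : c ∉ S) (he : e ∉ S) (hab : a ≠ b) (hce : c ≠ e)
    (hd : a + b = c + e) : ∃ H, IsFlat n 2 H ∧ (H ∩ S).ncard = 2 := by
  have hac : a ≠ c := fun h => hc (h ▸ ha)
  have hbc : b ≠ c := fun h => hc (h ▸ hb)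
  have hd0 : a + b ≠ 0 := fun h => hab (by linear_combination h - vadd_self b)
  have hu0 : a + c ≠ 0 := fun h => hac (by linear_combination h - vadd_self c)
  have hdu : a + b ≠ a + c := fun h => hbc (by linear_combination h)
  have hdu0 : (a + b) + (a + c) ≠ 0 := fun h =>
    hbc (by linear_combination h - vadd_self a - vadd_self c)
  have hddu : a + b ≠ (a + b) + (a + c) := fun h =>
    hac (by linear_combination -h - vadd_self c)
  have hudu : a + c ≠ (a + b) + (a + c) := fun h =>
    hab (by linear_combination -h - vadd_self b)
  set W : Submodule (ZMod 2) (Fin n → ZMod 2) :=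
    Submodule.span (ZMod 2) {a + b, a + c} with hW
  have hWset : (W : Set (Fin n → ZMod 2)) = {0, a + b, a + c, (a + b) + (a + c)} := by
    ext z
    constructor
    · intro hz
      rw [hW, SetLike.mem_coe, Submodule.mem_span_pair] at hz
      obtain ⟨s, t, hst⟩ := hz
      have h01 : ∀ x : ZMod 2, x = 0 ∨ x = 1 := by decide
      rcases h01 s with rfl | rfl <;> rcases h01 t with rfl | rfl <;>
        simp only [zero_smul, one_smul, zero_add, add_zero] at hst <;>
        rw [← hst] <;> simp
    · intro hz
      rcases hz with rfl | rfl | rfl | rfl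
      · exact Submodule.zero_mem _
      · exact Submodule.subset_span (by simp)
      · exact Submodule.subset_span (by simp)
      · exact Submodule.add_mem _ (Submodule.subset_span (by simp))
          (Submodule.subset_span (by simp))
  have hWcard : (W : Set (Fin n → ZMod 2)).ncard = 4 := by
    rw [hWset,
      Set.ncard_insert_of_notMem
        (by simp [Ne, eq_comm, hd0, hu0, hdu0]) (Set.toFinite _),
      Set.ncard_insert_of_notMem (by simp [hdu, hddu]) (Set.toFinite _),
      Set.ncard_pair hudu]
  have hfr : Module.finrank (ZMod 2) W = 2 := by
    have : Fintype W := Fintype.ofFinite _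
    have hcard : Fintype.card W = 4 := by
      rw [← Nat.card_eq_fintype_card,
        show (Nat.card W) = Nat.card (W : Set (Fin n → ZMod 2)) from rfl,
        Nat.card_coe_set_eq, hWcard]
    have hpow := Module.card_eq_pow_finrank (K := ZMod 2) (V := W)
    rw [hcard, ZMod.card] at hpow
    have h24 : (2 : ℕ) ^ 2 = 2 ^ Module.finrank (ZMod 2) W := by
      rw [← hpow]; norm_num
    exact (Nat.pow_right_injective le_rfl h24).symm
  have h1 : a + (a + b) = b := by linear_combination vadd_self a
  have h2 : a + (a + c) = c := by linear_combination vadd_self a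
  have h3 : a + ((a + b) + (a + c)) = e := by
    linear_combination hd + vadd_self a + vadd_self c
  refine ⟨{a, b, c, e}, ⟨a, W, hfr, ?_⟩, ?_⟩
  · rw [hWset, Set.image_insert_eq, Set.image_insert_eq, Set.image_insert_eq,
      Set.image_singleton]
    simp only [add_zero, h1, h2, h3]
  · have hinter : ({a, b, c, e} : Set (Fin n → ZMod 2)) ∩ S = {a, b} := by
      ext x
      constructor
      · rintro ⟨hx, hxS⟩
        rcases hx with rfl | rfl | rfl | rfl
        · exact Or.inl rfl
        · exact Or.inr rfl
        · exact absurd hxS hc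
        · exact absurd hxS he
      · rintro (rfl | rfl)
        · exact ⟨by simp, ha⟩
        · exact ⟨by simp, hb⟩
    rw [hinter, Set.ncard_pair hab]

/-- Core lemma: if both `S` and its complement have at least two elements,
then there are pairs with a common difference on both sides. -/
lemma exists_common_diff {S : Set (Fin n → ZMod 2)}
    (hS : 2 ≤ S.ncard) (hT : 2 ≤ Sᶜ.ncard) :
    ∃ a b c e : Fin n → ZMod 2, a ∈ S ∧ b ∈ S ∧ c ∉ S ∧ e ∉ S ∧
      a ≠ b ∧ c ≠ e ∧ a + b = c + e := by
  obtain ⟨a, b, ha, hb, hab⟩ :=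
    (Set.one_lt_ncard_iff (Set.toFinite S)).1 (by omega)
  obtain ⟨c, e, hc, he, hce⟩ :=
    (Set.one_lt_ncard_iff (Set.toFinite Sᶜ)).1 (by omega)
  by_cases h1 : ∃ z, z ∉ S ∧ z + (a + b) ∉ S
  · obtain ⟨z, hz1, hz2⟩ := h1
    refine ⟨a, b, z, z + (a + b), ha, hb, hz1, hz2, hab, ?_, ?_⟩
    · intro h
      exact hab (by linear_combination -h - vadd_self b)
    · linear_combination -vadd_self z
  by_cases h2 : ∃ z, z ∈ S ∧ z + (c + e) ∈ S
  · obtain ⟨z, hz1, hz2⟩ := h2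
    refine ⟨z, z + (c + e), c, e, hz1, hz2, hc, he, ?_, hce, ?_⟩
    · intro h
      exact hce (by linear_combination -h - vadd_self e)
    · linear_combination vadd_self z
  exfalso
  push_neg at h1 h2
  -- `(· + (a+b))` maps `Sᶜ` into `S`, and `(· + (c+e))` maps `S` into `Sᶜ`
  have hinj1 : Function.Injective (fun z : Fin n → ZMod 2 => z + (a + b)) :=
    fun u v huv => by simpa using huv
  have hinj2 : Function.Injective (fun z : Fin n → ZMod 2 => z + (c + e)) :=
    fun u v huv => by simpa using huv
  have him1 : (fun z : Fin n → ZMod 2 => z + (a + b)) '' Sᶜ ⊆ S := by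
    rintro _ ⟨z, hz, rfl⟩
    exact h1 z hz
  have him2 : (fun z : Fin n → ZMod 2 => z + (c + e)) '' S ⊆ Sᶜ := by
    rintro _ ⟨z, hz, rfl⟩
    exact h2 z hz
  have hle1 : Sᶜ.ncard ≤ S.ncard := by
    rw [← Set.ncard_image_of_injective Sᶜ hinj1]
    exact Set.ncard_le_ncard him1 (Set.toFinite S)
  have hle2 : S.ncard ≤ Sᶜ.ncard := by
    rw [← Set.ncard_image_of_injective S hinj2]
    exact Set.ncard_le_ncard him2 (Set.toFinite Sᶜ)
  have heq : (fun z : Fin n → ZMod 2 => z + (a + b)) '' Sᶜ = S := by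
    apply Set.eq_of_subset_of_ncard_le him1 _ (Set.toFinite S)
    rw [Set.ncard_image_of_injective Sᶜ hinj1]
    omega
  obtain ⟨z, hz, hza⟩ := heq.symm ▸ ha
  have hza' : z + (a + b) = a := hza
  have : z = b := by linear_combination hza' - vadd_self b
  exact hz (this ▸ hb)

end aux

theorem stmt_5 (n : ℕ) (hn : 2 ≤ n) :
    Sp n 2 2 = Set.Icc 2 (2 ^ n - 2) := by
  have h4 : 4 ≤ 2 ^ n := by
    calc (4 : ℕ) = 2 ^ 2 := by norm_num
    _ ≤ 2 ^ n := Nat.pow_le_pow_right (by norm_num) hn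
  ext m
  simp only [Sp, Set.mem_setOf_eq, Set.mem_Icc]
  constructor
  · rintro ⟨hm, hf⟩
    constructor
    · -- 2 ≤ m
      by_contra h
      push_neg at h
      interval_cases m
      · obtain ⟨H, -, hH2⟩ := hf ∅ (by simp)
        simp at hH2
      · obtain ⟨H, -, hH2⟩ := hf {0} (by simp)
        have := Set.ncard_le_ncard
          (Set.inter_subset_right : H ∩ {0} ⊆ {0}) (Set.toFinite _)
        simp [hH2] at this
    · -- m ≤ 2 ^ n - 2
      by_contra h
      push_neg at h
      have hcases : m = 2 ^ n - 1 ∨ m = 2 ^ n := by omega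
      rcases hcases with rfl | rfl
      · have hcc : (({0} : Set (Fin n → ZMod 2))ᶜ).ncard = 2 ^ n - 1 := by
          have hcompl := Set.ncard_add_ncard_compl ({0} : Set (Fin n → ZMod 2))
          rw [natcard_space] at hcompl
          simp only [Set.ncard_singleton] at hcompl
          omega
        obtain ⟨H, hflat, hH2⟩ := hf ({0} : Set (Fin n → ZMod 2))ᶜ hcc
        have hHcard : H.ncard = 4 := by
          have := flat_ncard hflat
          norm_num at this
          exact this
        have hsub : H ⊆ (H ∩ ({0} : Set (Fin n → ZMod 2))ᶜ) ∪ {0} := by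
          intro x hx
          by_cases hx0 : x = (0 : Fin n → ZMod 2)
          · exact Or.inr hx0
          · exact Or.inl ⟨hx, hx0⟩
        have hle := Set.ncard_le_ncard hsub (Set.toFinite _)
        have hun := Set.ncard_union_le (H ∩ ({0} : Set (Fin n → ZMod 2))ᶜ)
          ({0} : Set (Fin n → ZMod 2))
        rw [hH2, hHcard] at *
        simp only [Set.ncard_singleton] at hun
        omega
      · have huc : (Set.univ : Set (Fin n → ZMod 2)).ncard = 2 ^ n := by
          rw [Set.ncard_univ, natcard_space]
        obtain ⟨H, hflat, hH2⟩ := hf Set.univ huc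
        have hHcard : H.ncard = 4 := by
          have := flat_ncard hflat
          norm_num at this
          exact this
        rw [Set.inter_univ, hHcard] at hH2
        omega
  · rintro ⟨hm2, hm⟩
    refine ⟨by omega, ?_⟩
    intro S hS
    have hcompl := Set.ncard_add_ncard_compl S
    rw [natcard_space] at hcompl
    have hT : 2 ≤ Sᶜ.ncard := by omega
    obtain ⟨a, b, c, e, ha, hb, hc, he, hab, hce, hd⟩ :=
      exists_common_diff (by omega : 2 ≤ S.ncard) hT
    exact flat_of_pairs ha hb hc he hab hce hd
end

section
/- Let m ∈ [0, 2^n] and let L_m ⊆ F_2^n be the lexicographic construction of m points. If H is any k-dimensional affine subspace of F_2^n, then |H ∩ L_m| is either equal to min(2^k, m), or its binary digit sum satisfies s_2(|H ∩ L_m|) ≤ s_2(m). In particular, if s_2(t) > s_2(m) and t < 2^k and t < m, then L_m induces no [k,t]-flat. -/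
/-- Binary digit sum. -/
def s2 (m : ℕ) : ℕ := (Nat.digits 2 m).sum

/-- The integer whose binary digits are the coordinates of `x` (coordinate `i` at place `2^i`). -/
def vecVal (n : ℕ) (x : Fin n → ZMod 2) : ℕ := ∑ i : Fin n, (x i).val * 2 ^ (i : ℕ)

/-- The lexicographic construction of `m` points in `F_2^n`. -/
def lexSet (n m : ℕ) : Set (Fin n → ZMod 2) := {x | vecVal n x < m}

/- ### Auxiliary lemmas -/

namespace Stmt7Aux

abbrev V (n : ℕ) := Fin n → ZMod 2

/- digit-sum lemmas -/

lemma s2_rec (n : ℕ) : s2 n = n % 2 + s2 (n / 2) := by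
  rcases Nat.eq_zero_or_pos n with h | h
  · simp [h, s2]
  · unfold s2
    rw [Nat.digits_def' (by norm_num) h]
    simp

lemma s2_zero : s2 0 = 0 := by simp [s2]

lemma s2_pow_add {j b : ℕ} (hb : b < 2 ^ j) : s2 (2 ^ j + b) = 1 + s2 b := by
  induction j generalizing b with
  | zero =>
    interval_cases b
    simp [s2]
  | succ j ih =>
    have h1 : (2 ^ (j+1) + b) % 2 = b % 2 := by omega
    have h2 : (2 ^ (j+1) + b) / 2 = 2 ^ j + b / 2 := by omega
    rw [s2_rec (2 ^ (j+1) + b), h1, h2, ih (by omega), s2_rec b]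
    ring

lemma s2_two_pow (j : ℕ) : s2 (2 ^ j) = 1 := by
  have := s2_pow_add (j := j) (b := 0) (by positivity)
  simpa [s2_zero] using this

lemma s2_pos {m : ℕ} (hm : 0 < m) : 1 ≤ s2 m := by
  induction m using Nat.strong_induction_on with
  | _ m ih =>
    rw [s2_rec]
    rcases Nat.eq_zero_or_pos (m % 2) with h | h
    · have h2 : 0 < m / 2 := by omega
      have := ih (m / 2) (by omega) h2
      omega
    · omega

/- vecVal lemmas -/

lemma zmod2_cases (a : ZMod 2) : a = 0 ∨ a = 1 := by revert a; decide

lemma zmod2_ne {a c : ZMod 2} (h : a ≠ c) : a + 1 = c := by revert a c; decide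

lemma zmod2_add_self (a : ZMod 2) : a + a = 0 := by revert a; decide

lemma sum_range_two_pow (n : ℕ) : ∑ i ∈ Finset.range n, 2 ^ i < 2 ^ n := by
  induction n with
  | zero => simp
  | succ n ih => rw [Finset.sum_range_succ, pow_succ]; omega

lemma vecVal_lt (n : ℕ) (x : V n) : vecVal n x < 2 ^ n := by
  have h : vecVal n x ≤ ∑ i : Fin n, 1 * 2 ^ (i : ℕ) := by
    apply Finset.sum_le_sum
    intro i _
    have h1 : (x i).val ≤ 1 := by
      rcases zmod2_cases (x i) with h | h <;> rw [h] <;> decide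
    exact Nat.mul_le_mul_right _ h1
  have h2 : ∑ i : Fin n, 1 * 2 ^ (i : ℕ) = ∑ i ∈ Finset.range n, 2 ^ i := by
    rw [Finset.sum_range fun i => 2 ^ i]
    simp
  have h3 := sum_range_two_pow n
  omega

lemma vecVal_snoc (n : ℕ) (y : V n) (c : ZMod 2) :
    vecVal (n+1) (Fin.snoc y c) = vecVal n y + c.val * 2 ^ n := by
  unfold vecVal
  rw [Fin.sum_univ_castSucc]
  simp

/- slices -/

def sl (n : ℕ) (c : ZMod 2) (S : Set (V (n+1))) : Set (V n) :=
  {y | Fin.snoc y c ∈ S}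

lemma mem_sl {n : ℕ} {c : ZMod 2} {S : Set (V (n+1))} {y : V n} :
    y ∈ sl n c S ↔ (Fin.snoc y c : V (n+1)) ∈ S := Iff.rfl

lemma sl_inter (n : ℕ) (c : ZMod 2) (S T : Set (V (n+1))) :
    sl n c (S ∩ T) = sl n c S ∩ sl n c T := rfl

lemma snoc_injective (n : ℕ) (c : ZMod 2) :
    Function.Injective (fun y : V n => (Fin.snoc y c : V (n+1))) := by
  intro y z h
  have := congrArg (fun v : V (n+1) => Fin.init v) h
  simpa [Fin.init_snoc] using this

lemma ncard_eq_sls (n : ℕ) (S : Set (V (n+1))) :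
    S.ncard = (sl n 0 S).ncard + (sl n 1 S).ncard := by
  have hrep : ∀ x : V (n+1), x = Fin.snoc (Fin.init x) (x (Fin.last n)) :=
    fun x => (Fin.snoc_init_self x).symm
  have hU : S = (fun y : V n => (Fin.snoc y 0 : V (n+1))) '' sl n 0 S
      ∪ (fun y : V n => Fin.snoc y 1) '' sl n 1 S := by
    ext x
    constructor
    · intro hx
      rcases zmod2_cases (x (Fin.last n)) with h | h
      · left; exact ⟨Fin.init x, by simpa [sl, ← h] using (hrep x ▸ hx), by rw [← h]; exact (hrep x).symm⟩
      · right; exact ⟨Fin.init x, by simpa [sl, ← h] using (hrep x ▸ hx), by rw [← h]; exact (hrep x).symm⟩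
    · rintro (⟨y, hy, rfl⟩ | ⟨y, hy, rfl⟩) <;> exact hy
  conv_lhs => rw [hU]
  rw [Set.ncard_union_eq, Set.ncard_image_of_injective _ (snoc_injective n 0),
    Set.ncard_image_of_injective _ (snoc_injective n 1)]
  rw [Set.disjoint_left]
  rintro x ⟨y, _, rfl⟩ ⟨z, _, h⟩
  have := congrArg (fun v : V (n+1) => v (Fin.last n)) h
  simp at this

lemma sl_lexSet_low {n m : ℕ} (hm : m ≤ 2 ^ n) :
    sl n 0 (lexSet (n+1) m) = lexSet n m ∧
    sl n 1 (lexSet (n+1) m) = ∅ := by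
  constructor
  · ext y; simp [sl, lexSet, vecVal_snoc]
  · ext y
    simp only [sl, lexSet, Set.mem_setOf_eq, Set.mem_empty_iff_false, iff_false, not_lt]
    rw [vecVal_snoc]
    simp only [show ((1 : ZMod 2)).val = 1 from rfl, one_mul]
    omega

lemma sl_lexSet_high {n m b : ℕ} (hm : m = 2 ^ n + b) :
    sl n 0 (lexSet (n+1) m) = Set.univ ∧
    sl n 1 (lexSet (n+1) m) = lexSet n b := by
  subst hm
  constructor
  · ext y
    simp only [sl, lexSet, Set.mem_setOf_eq, Set.mem_univ, iff_true]
    rw [vecVal_snoc]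
    have h1 := vecVal_lt n y
    simp only [show ((0 : ZMod 2)).val = 0 from rfl, zero_mul]
    omega
  · ext y
    simp only [sl, lexSet, Set.mem_setOf_eq]
    rw [vecVal_snoc]
    simp only [show ((1 : ZMod 2)).val = 1 from rfl, one_mul]
    omega

/- flats -/

lemma submodule_ncard (n : ℕ) (W : Submodule (ZMod 2) (V n)) :
    (W : Set (V n)).ncard = 2 ^ (Module.finrank (ZMod 2) W) := by
  classical
  have h : Nat.card W = 2 ^ (Module.finrank (ZMod 2) W) := by
    haveI : Fintype W := Fintype.ofFinite W
    rw [Nat.card_eq_fintype_card]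
    have := Module.card_eq_pow_finrank (K := ZMod 2) (V := W)
    simpa [ZMod.card] using this
  rw [← h, ← Nat.card_coe_set_eq]
  rfl

lemma mem_flat {n : ℕ} (x z : V n) (W : Submodule (ZMod 2) (V n)) :
    z ∈ (fun w => x + w) '' (W : Set (V n)) ↔ z - x ∈ W := by
  constructor
  · rintro ⟨w, hw, rfl⟩
    simpa using hw
  · intro h
    exact ⟨z - x, h, by module⟩

lemma flat_ncard {n k : ℕ} {H : Set (V n)} (hH : IsFlat n k H) : H.ncard = 2 ^ k := by
  obtain ⟨x, W, hrk, rfl⟩ := hH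
  rw [Set.ncard_image_of_injective _ (add_right_injective x), submodule_ncard, hrk]

lemma flat_dim_le {n k : ℕ} {H : Set (V n)} (hH : IsFlat n k H) : k ≤ n := by
  obtain ⟨x, W, hrk, rfl⟩ := hH
  rw [← hrk]
  have h1 := Submodule.finrank_le W
  rwa [Module.finrank_fintype_fun_eq_card, Fintype.card_fin] at h1

def iota (n : ℕ) : V n →ₗ[ZMod 2] V (n+1) where
  toFun y := Fin.snoc y 0
  map_add' y z := by
    funext i
    refine Fin.lastCases ?_ (fun j => ?_) i <;> simp
  map_smul' a y := by
    funext i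
    refine Fin.lastCases ?_ (fun j => ?_) i <;> simp

lemma iota_apply (n : ℕ) (y : V n) : iota n y = Fin.snoc y 0 := rfl

lemma iota_injective (n : ℕ) : Function.Injective (iota n) := by
  intro y z h
  have := congrArg Fin.init h
  simpa [iota_apply, Fin.init_snoc] using this

/-- A vector with last coordinate 0 is in the range of `iota`. -/
lemma eq_iota_init {n : ℕ} (w : V (n+1)) (hw : w (Fin.last n) = 0) :
    w = iota n (Fin.init w) := by
  funext i
  refine Fin.lastCases ?_ (fun j => ?_) i
  · rw [hw, iota_apply, Fin.snoc_last]
  · rw [iota_apply, Fin.snoc_castSucc, Fin.init]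

lemma snoc_sub_eq_iota {n : ℕ} (y : V n) (c : ZMod 2) (x : V (n+1))
    (hx : x (Fin.last n) = c) :
    (Fin.snoc y c : V (n+1)) - x = iota n (y - Fin.init x) := by
  funext i
  refine Fin.lastCases ?_ (fun j => ?_) i
  · simp [iota_apply, hx]
  · simp [iota_apply, Fin.init]

lemma comap_iota_finrank_eq {n k : ℕ} (W : Submodule (ZMod 2) (V (n+1)))
    (hrk : Module.finrank (ZMod 2) W = k)
    (hW : ∀ w ∈ W, w (Fin.last n) = 0) :
    Module.finrank (ZMod 2) (W.comap (iota n)) = k := by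
  rw [← hrk]
  refine LinearEquiv.finrank_eq ?_
  refine LinearEquiv.ofBijective ((iota n).restrict (p := W.comap (iota n)) (q := W)
    (fun y hy => hy)) ⟨?_, ?_⟩
  · intro ⟨y, hy⟩ ⟨z, hz⟩ h
    have : iota n y = iota n z := congrArg Subtype.val h
    exact Subtype.ext (iota_injective n this)
  · rintro ⟨w, hw⟩
    have hw0 : w = iota n (Fin.init w) := eq_iota_init w (hW w hw)
    refine ⟨⟨Fin.init w, ?_⟩, ?_⟩
    · show iota n (Fin.init w) ∈ W
      rw [← hw0]; exact hw
    · exact Subtype.ext hw0.symm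

lemma comap_iota_finrank_split {n k : ℕ} (W : Submodule (ZMod 2) (V (n+1)))
    (hrk : Module.finrank (ZMod 2) W = k)
    (w₀ : V (n+1)) (hw₀ : w₀ ∈ W) (hl : w₀ (Fin.last n) = 1) :
    ∃ k', k = k' + 1 ∧ Module.finrank (ZMod 2) (W.comap (iota n)) = k' := by
  classical
  set A : Set (V (n+1)) := {w | w ∈ W ∧ w (Fin.last n) = 0} with hA
  set B : Set (V (n+1)) := {w | w ∈ W ∧ w (Fin.last n) = 1} with hB
  have hsplit : (W : Set (V (n+1))) = A ∪ B := by
    ext w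
    constructor
    · intro hw
      rcases zmod2_cases (w (Fin.last n)) with h | h
      · exact Or.inl ⟨hw, h⟩
      · exact Or.inr ⟨hw, h⟩
    · rintro (⟨hw, _⟩ | ⟨hw, _⟩) <;> exact hw
  have hdisj : Disjoint A B := by
    rw [Set.disjoint_left]
    rintro w ⟨_, h0⟩ ⟨_, h1⟩
    rw [h0] at h1
    exact absurd h1 (by decide)
  have hcardW : (W : Set (V (n+1))).ncard = A.ncard + B.ncard := by
    rw [hsplit, Set.ncard_union_eq hdisj (Set.toFinite _) (Set.toFinite _)]
  have himg : (fun w => w + w₀) '' A = B := by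
    ext v
    constructor
    · rintro ⟨w, ⟨hwW, hw0⟩, rfl⟩
      refine ⟨W.add_mem hwW hw₀, ?_⟩
      show (w + w₀) (Fin.last n) = 1
      rw [Pi.add_apply, hw0, hl, zero_add]
    · rintro ⟨hvW, hv1⟩
      refine ⟨v + w₀, ⟨W.add_mem hvW hw₀, ?_⟩, ?_⟩
      · rw [Pi.add_apply, hv1, hl]; decide
      · funext i
        simp [Pi.add_apply, add_assoc, zmod2_add_self]
  have hAB : A.ncard = B.ncard := by
    rw [← himg, Set.ncard_image_of_injective _ (add_left_injective w₀)]
  have hiotaA : iota n '' ((W.comap (iota n) : Submodule (ZMod 2) (V n)) : Set (V n)) = A := by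
    ext w
    constructor
    · rintro ⟨y, hy, rfl⟩
      exact ⟨hy, by simp [iota_apply]⟩
    · rintro ⟨hwW, hw0⟩
      refine ⟨Fin.init w, ?_, (eq_iota_init w hw0).symm⟩
      show iota n (Fin.init w) ∈ W
      rw [← eq_iota_init w hw0]
      exact hwW
  have hcardA : A.ncard = 2 ^ (Module.finrank (ZMod 2) (W.comap (iota n))) := by
    rw [← hiotaA, Set.ncard_image_of_injective _ (iota_injective n), submodule_ncard]
  have hcardWall : (W : Set (V (n+1))).ncard = 2 ^ k := by
    rw [submodule_ncard, hrk]
  set k' := Module.finrank (ZMod 2) (W.comap (iota n)) with hk'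
  have hkk : 2 ^ k = 2 ^ (k' + 1) := by rw [pow_succ]; omega
  exact ⟨k', Nat.pow_right_injective (le_refl 2) hkk, rfl⟩

lemma flat_sls {n k : ℕ} {H : Set (V (n+1))} (hH : IsFlat (n+1) k H) :
    (∃ c : ZMod 2, IsFlat n k (sl n c H) ∧ sl n (c+1) H = ∅) ∨
    (∃ k', k = k' + 1 ∧ IsFlat n k' (sl n 0 H) ∧ IsFlat n k' (sl n 1 H)) := by
  obtain ⟨x, W, hrk, rfl⟩ := hH
  by_cases hW : ∀ w ∈ W, w (Fin.last n) = 0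
  · left
    refine ⟨x (Fin.last n), ⟨Fin.init x, W.comap (iota n),
      comap_iota_finrank_eq W hrk hW, ?_⟩, ?_⟩
    · ext y
      rw [mem_sl, mem_flat, mem_flat, snoc_sub_eq_iota y _ x rfl]
      exact Submodule.mem_comap.symm
    · ext y
      simp only [Set.mem_empty_iff_false, iff_false]
      rw [mem_sl, mem_flat]
      intro hy
      have h2 := hW _ hy
      rw [Pi.sub_apply, Fin.snoc_last] at h2
      rw [show x (Fin.last n) + 1 - x (Fin.last n) = 1 from by ring] at h2
      exact absurd h2 (by decide)
  · right
    push_neg at hW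
    obtain ⟨w₀, hw₀W, hw₀l⟩ := hW
    have hl1 : w₀ (Fin.last n) = 1 := by
      rcases zmod2_cases (w₀ (Fin.last n)) with h | h
      · exact absurd h hw₀l
      · exact h
    obtain ⟨k', hk, hrk'⟩ := comap_iota_finrank_split W hrk w₀ hw₀W hl1
    have key : ∀ c : ZMod 2, IsFlat n k' (sl n c ((fun w => x + w) '' (W : Set (V (n+1))))) := by
      intro c
      set xc : V (n+1) := if x (Fin.last n) = c then x else x + w₀ with hxc
      have hxcl : xc (Fin.last n) = c := by
        rw [hxc]
        split_ifs with h
        · exact h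
        · rw [Pi.add_apply, hl1]; exact zmod2_ne h
      have hxcx : xc - x ∈ W := by
        rw [hxc]
        split_ifs with h
        · simp [W.zero_mem]
        · rw [add_sub_cancel_left]; exact hw₀W
      refine ⟨Fin.init xc, W.comap (iota n), hrk', ?_⟩
      ext y
      rw [mem_sl, mem_flat, mem_flat]
      constructor
      · intro h
        have h2 : (Fin.snoc y c : V (n+1)) - xc ∈ W := by
          have h3 := W.sub_mem h hxcx
          rwa [show (Fin.snoc y c : V (n+1)) - x - (xc - x) = Fin.snoc y c - xc from by abel]
            at h3
        rw [snoc_sub_eq_iota y c xc hxcl] at h2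
        exact Submodule.mem_comap.mp h2
      · intro h
        have h2 : (Fin.snoc y c : V (n+1)) - xc ∈ W := by
          rw [snoc_sub_eq_iota y c xc hxcl]
          exact Submodule.mem_comap.mpr h
        have h3 := W.add_mem h2 hxcx
        rwa [show (Fin.snoc y c : V (n+1)) - xc + (xc - x) = Fin.snoc y c - x from by abel]
          at h3
    exact ⟨k', hk, key 0, key 1⟩

/- ### the main induction -/

lemma main_flat : ∀ n k m, m ≤ 2 ^ n → ∀ H : Set (V n), IsFlat n k H →
    (H ∩ lexSet n m).ncard = min (2 ^ k) m ∨ s2 ((H ∩ lexSet n m).ncard) ≤ s2 m := by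
  intro n
  induction n with
  | zero =>
    intro k m hm H hH
    left
    have hk : k = 0 := Nat.le_zero.mp (flat_dim_le hH)
    subst hk
    interval_cases m
    · have h : lexSet 0 0 = ∅ := by ext x; simp [lexSet]
      rw [h, Set.inter_empty]
      simp
    · have h : lexSet 0 1 = Set.univ := by
        ext x
        simp [lexSet, vecVal]
      rw [h, Set.inter_univ, flat_ncard hH]
      simp
  | succ n ih =>
    intro k m hm H hH
    have hkn : k ≤ n + 1 := flat_dim_le hH
    rcases eq_or_lt_of_le hm with he | hlt
    · -- m = 2^(n+1): lexSet is everything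
      left
      have hu : lexSet (n+1) m = Set.univ := by
        ext x
        simp only [lexSet, Set.mem_setOf_eq, Set.mem_univ, iff_true]
        rw [he]
        exact vecVal_lt (n+1) x
      rw [hu, Set.inter_univ, flat_ncard hH]
      exact (min_eq_left (he ▸ Nat.pow_le_pow_right (by norm_num) hkn)).symm
    · have hsplit := ncard_eq_sls n (H ∩ lexSet (n+1) m)
      rw [sl_inter, sl_inter] at hsplit
      rcases le_or_gt m (2 ^ n) with hmn | hmn
      · -- low case : m ≤ 2^n
        obtain ⟨h0, h1⟩ := sl_lexSet_low hmn
        rw [h0, h1, Set.inter_empty, Set.ncard_empty, add_zero] at hsplit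
        rcases flat_sls hH with ⟨c, hc, hcem⟩ | ⟨k', rfl, h0f, h1f⟩
        · rcases zmod2_cases c with rfl | rfl
          · rw [hsplit]
            exact ih k m hmn _ hc
          · have h00 : sl n 0 H = ∅ := by
              rw [show (0 : ZMod 2) = 1 + 1 from by decide]
              exact hcem
            rw [hsplit, h00, Set.empty_inter, Set.ncard_empty]
            right
            simp [s2_zero]
        · rw [hsplit]
          rcases ih k' m hmn _ h0f with heq | hle
          · rcases le_total (2 ^ k') m with h | h
            · -- count = 2^k'
              right
              rw [heq, min_eq_left h, s2_two_pow]
              exact s2_pos (lt_of_lt_of_le (by positivity : (0:ℕ) < 2 ^ k') h)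
            · left
              rw [heq, min_eq_right h, min_eq_right]
              calc m ≤ 2 ^ k' := h
                _ ≤ 2 ^ (k' + 1) := Nat.pow_le_pow_right (by norm_num) (by omega)
          · right
            exact hle
      · -- high case : 2^n < m
        set b := m - 2 ^ n with hbdef
        have hmb : m = 2 ^ n + b := by omega
        have hb : b < 2 ^ n := by omega
        have hs2m : s2 m = 1 + s2 b := by rw [hmb, s2_pow_add hb]
        have hm0 : 0 < m := by omega
        obtain ⟨h0, h1⟩ := sl_lexSet_high hmb
        rw [h0, Set.inter_univ, h1] at hsplit
        rcases flat_sls hH with ⟨c, hc, hcem⟩ | ⟨k', rfl, h0f, h1f⟩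
        · rcases zmod2_cases c with rfl | rfl
          · -- all of H in lower half
            have h11 : sl n 1 H = ∅ := by
              rw [show (1 : ZMod 2) = 0 + 1 from by decide]
              exact hcem
            left
            rw [hsplit, h11, Set.empty_inter, Set.ncard_empty, add_zero, flat_ncard hc]
            have hk'n : k ≤ n := flat_dim_le hc
            have h2k : 2 ^ k ≤ m :=
              le_trans (Nat.pow_le_pow_right (by norm_num) hk'n) (by omega)
            exact (min_eq_left h2k).symm
          · -- all of H in upper half
            have h00 : sl n 0 H = ∅ := by
              rw [show (0 : ZMod 2) = 1 + 1 from by decide]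
              exact hcem
            rw [hsplit, h00, Set.ncard_empty, zero_add]
            right
            rcases ih k b (le_of_lt hb) _ hc with heq | hle
            · rcases le_total (2 ^ k) b with h | h
              · rw [heq, min_eq_left h, s2_two_pow]
                exact s2_pos hm0
              · rw [heq, min_eq_right h, hs2m]
                omega
            · rw [hs2m]
              omega
        · -- H splits
          rw [hsplit, flat_ncard h0f]
          have hk'n : k' ≤ n := flat_dim_le h0f
          have ht1le : (sl n 1 H ∩ lexSet n b).ncard ≤ 2 ^ k' :=
            le_trans (Set.ncard_le_ncard Set.inter_subset_left (Set.toFinite _))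
              (le_of_eq (flat_ncard h1f))
          rcases ih k' b (le_of_lt hb) _ h1f with heq | hle
          · rcases Nat.lt_or_ge b (2 ^ k') with hblt | hge
            · -- t1 = b < 2^k'
              right
              rw [heq, min_eq_right (le_of_lt hblt), s2_pow_add hblt, hs2m]
            · -- t1 = 2^k'
              left
              rw [heq, min_eq_left hge]
              have h2k : 2 ^ (k' + 1) ≤ m := by
                rw [pow_succ, hmb]
                have : 2 ^ k' ≤ 2 ^ n := Nat.pow_le_pow_right (by norm_num) hk'n
                omega
              rw [min_eq_left h2k, pow_succ]
              ring
          · rcases eq_or_lt_of_le ht1le with ht1 | ht1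
            · -- t1 = 2^k', total = 2^(k'+1)
              right
              rw [ht1, show (2:ℕ) ^ k' + 2 ^ k' = 2 ^ (k'+1) from by rw [pow_succ]; ring,
                s2_two_pow]
              exact s2_pos hm0
            · right
              rw [s2_pow_add ht1, hs2m]
              omega

end Stmt7Aux

open Stmt7Aux in
theorem stmt_7 (n k m : ℕ) (hm : m ≤ 2 ^ n) :
    (∀ H : Set (Fin n → ZMod 2), IsFlat n k H →
      (H ∩ lexSet n m).ncard = min (2 ^ k) m ∨ s2 ((H ∩ lexSet n m).ncard) ≤ s2 m) ∧
    (∀ t : ℕ, s2 m < s2 t → t < 2 ^ k → t < m →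
      ¬ ∃ H : Set (Fin n → ZMod 2), IsFlat n k H ∧ (H ∩ lexSet n m).ncard = t) := by
  refine ⟨fun H hH => main_flat n k m hm H hH, ?_⟩
  rintro t hst htk htm ⟨H, hH, hcard⟩
  rcases main_flat n k m hm H hH with heq | hle
  · rw [hcard] at heq
    rcases le_total (2 ^ k) m with h | h
    · rw [min_eq_left h] at heq; omega
    · rw [min_eq_right h] at heq; omega
  · rw [hcard] at hle
    omega
end

section
/- If s_2(t) > s_2(m) with 0 < t < 2^k and m ≤ 2^n, then there exists a subset S ⊆ F_2^n of size m such that no k-dimensional affine subspace of F_2^n contains exactly t points of S; i.e., [n,m] does not force [k,t]. -/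
/-!
Order `𝔽₂ⁿ` by reading vectors as binary numbers and let `S` be the set of the first `m` vectors.
If `m = 2 ^ a + r` with `r < 2 ^ a`, then `S` is the disjoint union of the subspace of vectors
supported on the first `a` coordinates and a translate of the first `r` vectors. A flat meets a
subspace in `0` or `2 ^ j` points, so by induction on `m` and the subadditivity of `s₂` (Legendre's
formula and `a! b! ∣ (a + b)!`) every flat meets `S` in a set of size `t'` with
`s₂ t' ≤ s₂ m < s₂ t`.
-/

open Pointwise Nat

theorem s2_eq_sub_padicValNat_factorial (m : ℕ) : s2 m = m - padicValNat 2 m ! := by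
  have h := sub_one_mul_padicValNat_factorial (p := 2) m
  have := digit_sum_le 2 m
  simp only [s2, Nat.add_one_sub_one, one_mul] at *
  omega

theorem s2_add_le (a b : ℕ) : s2 (a + b) ≤ s2 a + s2 b := by
  have hv : padicValNat 2 a ! + padicValNat 2 b ! ≤ padicValNat 2 (a + b)! := by
    rw [← padicValNat.mul (factorial_ne_zero a) (factorial_ne_zero b),
      ← padicValNat_dvd_iff_le (factorial_ne_zero _)]
    exact (pow_padicValNat_dvd).trans (factorial_mul_factorial_dvd_factorial_add a b)
  rw [s2_eq_sub_padicValNat_factorial a, s2_eq_sub_padicValNat_factorial b,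
    s2_eq_sub_padicValNat_factorial (a + b)]
  omega

theorem s2_two_pow_add {a r : ℕ} (hr : r < 2 ^ a) : s2 (2 ^ a + r) = s2 r + 1 := by
  have hlen : (digits 2 r).length ≤ a := (digits_length_le_iff one_lt_two r).mpr hr
  have h := digits_append_zeroes_append_digits (b := 2) (k := a - (digits 2 r).length)
    (m := 1) (n := r) one_lt_two one_pos
  rw [Nat.add_sub_cancel' hlen, mul_one, add_comm] at h
  rw [s2, s2, ← h]
  simp

@[simp]
theorem s2_zero : s2 0 = 0 := by simp [s2]

theorem s2_two_pow (a : ℕ) : s2 (2 ^ a) = 1 := by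
  simpa using s2_two_pow_add (Nat.two_pow_pos a)

theorem AffineSubspace.ncard_eq_zero_or_eq_pow_finrank {K V P : Type*} [Field K]
    [AddCommGroup V] [Module K V] [Finite V] [AddTorsor V P] (Q : AffineSubspace K P) :
    (Q : Set P).ncard = 0 ∨ (Q : Set P).ncard = Nat.card K ^ Module.finrank K Q.direction := by
  obtain hQ | ⟨p, hp⟩ := (Q : Set P).eq_empty_or_nonempty
  · simp [hQ]
  have : Nonempty Q := ⟨⟨p, hp⟩⟩
  right
  rw [← Nat.card_coe_set_eq, ← Module.natCard_eq_pow_finrank]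
  exact Nat.card_congr (Equiv.vaddConst (⟨p, hp⟩ : Q)).symm

theorem AffineSubspace.s2_ncard_le_one {V P : Type*} [AddCommGroup V] [Module (ZMod 2) V]
    [Finite V] [AddTorsor V P] (Q : AffineSubspace (ZMod 2) P) : s2 (Q : Set P).ncard ≤ 1 := by
  rcases Q.ncard_eq_zero_or_eq_pow_finrank with h | h <;> simp [h, s2_two_pow]

section Binary

variable {n : ℕ}

/-- `ZMod 2` is `Fin 2` by definition; coordinate `i` is the binary digit of weight `2 ^ i`. -/
def binVal : (Fin n → ZMod 2) ≃ Fin (2 ^ n) := finFunctionFinEquiv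

def initSeg (n m : ℕ) : Set (Fin n → ZMod 2) := {y | (binVal y : ℕ) < m}

theorem ncard_initSeg {m : ℕ} (hm : m ≤ 2 ^ n) : (initSeg n m).ncard = m := by
  have : initSeg n m = binVal ⁻¹' Set.range (Fin.castLE hm) := by
    rw [Fin.range_castLE]; rfl
  rw [this, Set.ncard_preimage_of_injective_subset_range binVal.injective (by simp),
    Set.ncard_range_of_injective (Fin.castLE_injective hm), Nat.card_eq_fintype_card,
    Fintype.card_fin]

theorem initSeg_eq_univ {m : ℕ} (hm : 2 ^ n ≤ m) : initSeg n m = Set.univ :=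
  Set.eq_univ_of_forall fun y => (binVal y).isLt.trans_le hm

theorem eq_zero_iff_testBit_binVal (y : Fin n → ZMod 2) (i : Fin n) :
    y i = 0 ↔ (binVal y : ℕ).testBit i = false := by
  have hval : (y i).val = (binVal y : ℕ) / 2 ^ (i : ℕ) % 2 := by
    conv_lhs => rw [← binVal.symm_apply_apply y]
    rfl
  rw [← ZMod.val_eq_zero, hval, testBit_eq_decide_div_mod_eq]
  have := Nat.mod_lt ((binVal y : ℕ) / 2 ^ (i : ℕ)) two_pos
  simp only [decide_eq_false_iff_not]
  omega

theorem binVal_lt_two_pow_iff (y : Fin n → ZMod 2) (a : ℕ) :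
    (binVal y : ℕ) < 2 ^ a ↔ ∀ i : Fin n, a ≤ i → y i = 0 := by
  refine ⟨fun h i hi => ?_, fun h => lt_pow_two_of_testBit _ fun j hj => ?_⟩
  · rw [eq_zero_iff_testBit_binVal]
    exact testBit_eq_false_of_lt (h.trans_le (pow_le_pow_right₀ one_le_two hi))
  · rcases lt_or_ge j n with hjn | hjn
    · exact (eq_zero_iff_testBit_binVal y ⟨j, hjn⟩).mp (h _ hj)
    · exact testBit_eq_false_of_lt ((binVal y).isLt.trans_le (pow_le_pow_right₀ one_le_two hjn))

theorem initSeg_two_pow (a : ℕ) :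
    initSeg n (2 ^ a) =
      (Submodule.pi {i : Fin n | a ≤ i} fun _ => ⊥ : Submodule (ZMod 2) (Fin n → ZMod 2)) := by
  ext y
  simp [initSeg, binVal_lt_two_pow_iff]

theorem s2_ncard_inter_initSeg_two_pow_le (Q : AffineSubspace (ZMod 2) (Fin n → ZMod 2)) (a : ℕ) :
    s2 ((Q : Set (Fin n → ZMod 2)) ∩ initSeg n (2 ^ a)).ncard ≤ 1 := by
  have := AffineSubspace.s2_ncard_le_one (Q ⊓ (Submodule.pi {i : Fin n | a ≤ i} fun _ => ⊥ :
    Submodule (ZMod 2) (Fin n → ZMod 2)).toAffineSubspace)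
  rwa [initSeg_two_pow]

theorem binVal_add_of_disjoint {y z : Fin n → ZMod 2} (h : ∀ i, y i = 0 ∨ z i = 0) :
    (binVal (y + z) : ℕ) = binVal y + binVal z := by
  have hcoord : ∀ i, ((y + z) i).val = (y i).val + (z i).val := fun i => by
    rcases h i with hi | hi <;> simp [hi]
  show ∑ i, ((y + z) i).val * 2 ^ (i : ℕ) =
    ∑ i, (y i).val * 2 ^ (i : ℕ) + ∑ i, (z i).val * 2 ^ (i : ℕ)
  rw [← Finset.sum_add_distrib]
  exact Finset.sum_congr rfl fun i _ => by rw [hcoord, add_mul]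

theorem binVal_single (i : Fin n) : (binVal (Pi.single i 1) : ℕ) = 2 ^ (i : ℕ) := by
  have h := finFunctionFinEquiv_single (m := 2) i 1
  rwa [Fin.val_one, one_mul] at h

theorem binVal_single_add {a : ℕ} (ha : a < n) {z : Fin n → ZMod 2}
    (hz : (binVal z : ℕ) < 2 ^ a) :
    (binVal (Pi.single ⟨a, ha⟩ 1 + z) : ℕ) = 2 ^ a + binVal z := by
  rw [binVal_add_of_disjoint, binVal_single]
  intro i
  by_cases hi : i = ⟨a, ha⟩
  · exact .inr ((binVal_lt_two_pow_iff z a).mp hz i (by simp [hi]))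
  · exact .inl (Pi.single_eq_of_ne hi 1)

theorem single_vadd_initSeg {a r : ℕ} (ha : a < n) (hr : r < 2 ^ a) :
    (Pi.single ⟨a, ha⟩ 1 : Fin n → ZMod 2) +ᵥ initSeg n r =
      {y | 2 ^ a ≤ (binVal y : ℕ) ∧ (binVal y : ℕ) < 2 ^ a + r} := by
  ext y
  simp only [Set.mem_vadd_set, initSeg, Set.mem_ofPred_eq, vadd_eq_add]
  constructor
  · rintro ⟨z, hz, rfl⟩
    rw [binVal_single_add ha (hz.trans hr)]
    omega
  · rintro ⟨hlo, hhi⟩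
    have := (binVal y).isLt
    let z := (binVal (n := n)).symm ⟨(binVal y : ℕ) - 2 ^ a, by omega⟩
    have hz : (binVal z : ℕ) = binVal y - 2 ^ a := by simp [z]
    refine ⟨z, ?_, binVal.injective (Fin.ext ?_)⟩
    · show (binVal z : ℕ) < r
      omega
    rw [binVal_single_add ha (by omega), hz]
    omega

theorem initSeg_two_pow_add {a r : ℕ} (ha : a < n) (hr : r < 2 ^ a) :
    initSeg n (2 ^ a + r) =
      initSeg n (2 ^ a) ∪ ((Pi.single ⟨a, ha⟩ 1 : Fin n → ZMod 2) +ᵥ initSeg n r) := by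
  rw [single_vadd_initSeg ha hr]
  ext y
  simp only [initSeg, Set.mem_union, Set.mem_ofPred_eq]
  omega

theorem disjoint_initSeg_two_pow_single_vadd {a r : ℕ} (ha : a < n) (hr : r < 2 ^ a) :
    Disjoint (initSeg n (2 ^ a)) ((Pi.single ⟨a, ha⟩ 1 : Fin n → ZMod 2) +ᵥ initSeg n r) := by
  rw [single_vadd_initSeg ha hr, Set.disjoint_left]
  intro y hy hy'
  exact absurd hy'.1 (not_le.mpr hy)

theorem s2_ncard_inter_initSeg_le (Q : AffineSubspace (ZMod 2) (Fin n → ZMod 2)) (m : ℕ) :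
    s2 ((Q : Set (Fin n → ZMod 2)) ∩ initSeg n m).ncard ≤ s2 m := by
  induction m using Nat.strong_induction_on generalizing Q with
  | _ m ih =>
  obtain rfl | hm := Nat.eq_zero_or_pos m
  · simp [initSeg]
  obtain ⟨a, r, hr, rfl⟩ : ∃ a r, r < 2 ^ a ∧ 2 ^ a + r = m := by
    have := Nat.lt_pow_succ_log_self one_lt_two m
    refine ⟨log 2 m, m - 2 ^ log 2 m, ?_, Nat.add_sub_cancel' (pow_log_le_self 2 hm.ne')⟩
    rw [pow_succ] at this
    omega
  rw [s2_two_pow_add hr]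
  have hlow := s2_ncard_inter_initSeg_two_pow_le Q a
  rcases lt_or_ge a n with ha | ha
  · rw [initSeg_two_pow_add ha hr, Set.inter_union_distrib_left, Set.ncard_union_eq
      ((disjoint_initSeg_two_pow_single_vadd ha hr).mono
        Set.inter_subset_right Set.inter_subset_right)]
    set e : Fin n → ZMod 2 := Pi.single ⟨a, ha⟩ 1
    have hhigh : s2 ((Q : Set (Fin n → ZMod 2)) ∩ (e +ᵥ initSeg n r)).ncard ≤ s2 r := by
      rw [← vadd_neg_vadd e (Q : Set (Fin n → ZMod 2)), ← Set.vadd_set_inter, Set.ncard_vadd_set,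
        ← AffineSubspace.coe_pointwise_vadd]
      exact ih r (by omega) _
    exact (s2_add_le _ _).trans (by omega)
  · have hn : 2 ^ n ≤ 2 ^ a := pow_le_pow_right₀ one_le_two ha
    rw [initSeg_eq_univ (hn.trans (Nat.le_add_right _ _)), ← initSeg_eq_univ hn]
    omega

end Binary

theorem IsFlat.exists_affineSubspace {n k : ℕ} {H : Set (Fin n → ZMod 2)} (hH : IsFlat n k H) :
    ∃ Q : AffineSubspace (ZMod 2) (Fin n → ZMod 2), H = Q := by
  obtain ⟨x, W, -, rfl⟩ := hH
  refine ⟨AffineSubspace.mk' x W, Set.ext fun y => ?_⟩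
  simp only [Set.mem_image, SetLike.mem_coe, AffineSubspace.mem_mk', vsub_eq_sub]
  exact ⟨fun ⟨w, hw, hy⟩ => by rwa [← hy, add_sub_cancel_left], fun hy => ⟨y - x, hy, by abel⟩⟩

theorem stmt_8_general (n k t m : ℕ) (hm : m ≤ 2 ^ n)
    (hs : s2 m < s2 t) :
    ∃ S : Set (Fin n → ZMod 2), S.ncard = m ∧
      ¬ ∃ H : Set (Fin n → ZMod 2), IsFlat n k H ∧ (H ∩ S).ncard = t := by
  refine ⟨initSeg n m, ncard_initSeg hm, ?_⟩
  rintro ⟨H, hH, hcard⟩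
  obtain ⟨Q, rfl⟩ := hH.exists_affineSubspace
  have := s2_ncard_inter_initSeg_le Q m
  rw [hcard] at this
  omega

theorem stmt_8 (n k t m : ℕ) (hm : m ≤ 2 ^ n) (ht0 : 0 < t) (ht : t < 2 ^ k)
    (hs : s2 m < s2 t) :
    ∃ S : Set (Fin n → ZMod 2), S.ncard = m ∧
      ¬ ∃ H : Set (Fin n → ZMod 2), IsFlat n k H ∧ (H ∩ S).ncard = t :=
  stmt_8_general n k t m hm hs
end

section
/- For every k ≥ 1 and n ≥ k, every subset S of F_2^n with |S| ≥ (5/2)·2^{n(1 − 1/2^{k−1})} contains a full k-dimensional affine subspace of F_2^n (i.e., there exists a k-flat H with H ⊆ S). -/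
/-!
Induction on `k`. If `S ⊆ 𝔽₂ⁿ` has `m` points, averaging over the `2ⁿ - 1` nonzero directions gives
`d ≠ 0` for which `T = {x ∈ S | x + d ∈ S}` has at least `(m² - m) / (2ⁿ - 1)` points. `T` is a union
of pairs `{x, x + d}`, so a hyperplane `U ∌ d` contains half of it, and a `(k-1)`-flat of `T ∩ U`
together with the direction `d` spans a `k`-flat of `S`. The exponent `1 - 1/2^(k-1)` is chosen so
that `m² / 2ⁿ` reproduces the threshold in dimension `n - 1`; only when `k = 2` does this miss the
constant `5/2`, but then `T ∩ U` still has the two points needed for a line.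
-/

open Module Submodule Finset

section Averaging

variable {G : Type*} [AddGroup G] [Fintype G] [DecidableEq G]

lemma sum_card_filter_add_mem (F : Finset G) :
    ∑ d, #{x ∈ F | x + d ∈ F} = #F * #F := by
  have hfiber (x : G) : #{d | x + d ∈ F} = #F :=
    card_nbij' (x + ·) (-x + ·) (fun d hd => by simpa using hd) (fun y hy => by simpa using hy)
      (fun d _ => by simp) (fun y _ => by simp)
  calc ∑ d, #{x ∈ F | x + d ∈ F} = ∑ x ∈ F, #{d | x + d ∈ F} := by
        simp only [card_filter]; exact sum_comm
    _ = #F * #F := by simp [hfiber]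

lemma exists_ne_zero_card_mul_card_le [Nontrivial G] (F : Finset G) :
    ∃ d ≠ 0, #F * #F ≤ #F + (Fintype.card G - 1) * #{x ∈ F | x + d ∈ F} := by
  set c : G → ℕ := fun d => #{x ∈ F | x + d ∈ F}
  have hc0 : c 0 = #F := by simp [c]
  obtain ⟨d, hd, hmax⟩ := (univ.erase (0 : G)).exists_max_image c
    ⟨_, mem_erase.2 ⟨exists_ne (0 : G) |>.choose_spec, mem_univ _⟩⟩
  refine ⟨d, ne_of_mem_erase hd, ?_⟩
  have hsum : ∑ e ∈ univ.erase 0, c e + c 0 = #F * #F :=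
    (sum_erase_add univ c (mem_univ 0)).trans (sum_card_filter_add_mem F)
  have hle : ∑ e ∈ univ.erase 0, c e ≤ (Fintype.card G - 1) * c d := by
    simpa [card_erase_of_mem] using sum_le_card_nsmul _ c (c d) hmax
  change _ ≤ _ + _ * c d
  omega

end Averaging

section Flats

variable {V : Type*} [AddCommGroup V] [Module (ZMod 2) V]

lemma mem_span_singleton_zmod_two {v a : V} : a ∈ span (ZMod 2) {v} ↔ a = 0 ∨ a = v := by
  rw [mem_span_singleton]
  constructor
  · rintro ⟨c, rfl⟩
    fin_cases c
    exacts [Or.inl (zero_smul _ _), Or.inr (one_smul _ _)]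
  · rintro (rfl | rfl)
    exacts [⟨0, zero_smul _ _⟩, ⟨1, one_smul _ _⟩]

def ContainsFlat (k : ℕ) (S : Set V) : Prop :=
  ∃ (x : V) (W : Submodule (ZMod 2) V), finrank (ZMod 2) W = k ∧ (x + ·) '' (W : Set V) ⊆ S

variable {k : ℕ}

lemma ContainsFlat.mono {S T : Set V} (h : ContainsFlat k S) (hST : S ⊆ T) : ContainsFlat k T :=
  let ⟨x, W, hW, hxW⟩ := h
  ⟨x, W, hW, hxW.trans hST⟩

lemma ContainsFlat.image {U : Type*} [AddCommGroup U] [Module (ZMod 2) U] {S : Set U}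
    (h : ContainsFlat k S) (f : U →ₗ[ZMod 2] V) (hf : Function.Injective f) :
    ContainsFlat k (f '' S) := by
  obtain ⟨x, W, hW, hxW⟩ := h
  refine ⟨f x, W.map f, (equivMapOfInjective f hf W).finrank_eq.symm.trans hW, ?_⟩
  rintro _ ⟨_, ⟨w, hw, rfl⟩, rfl⟩
  exact ⟨x + w, hxW ⟨w, hw, rfl⟩, map_add f x w⟩

lemma containsFlat_one_of_one_lt_ncard {S : Set V} (hS : 1 < S.ncard) : ContainsFlat 1 S := by
  obtain ⟨x, y, hx, hy, hxy⟩ := (Set.one_lt_ncard_iff (Set.finite_of_ncard_pos (by omega))).1 hS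
  have hxy' : x + y ≠ 0 := fun h => hxy (by rwa [← ZModModule.sub_eq_add, sub_eq_zero] at h)
  refine ⟨x, span (ZMod 2) {x + y}, finrank_span_singleton hxy', ?_⟩
  rintro _ ⟨w, hw, rfl⟩
  rcases mem_span_singleton_zmod_two.1 hw with rfl | rfl
  · simpa using hx
  · show x + (x + y) ∈ S
    rwa [← add_assoc, ZModModule.add_self, zero_add]

lemma ContainsFlat.succ_of_inter [FiniteDimensional (ZMod 2) V] {U : Submodule (ZMod 2) V}
    {d : V} (hdU : d ∉ U) {T : Set V} (hT : ∀ x ∈ T, x + d ∈ T) (h : ContainsFlat k (T ∩ U)) :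
    ContainsFlat (k + 1) T := by
  obtain ⟨x, W, hW, hxW⟩ := h
  have hmem (w : V) (hw : w ∈ W) : x + w ∈ T ∩ U := hxW ⟨w, hw, rfl⟩
  have hWU : W ≤ U := fun w hw => by
    simpa using U.sub_mem (hmem w hw).2 (hmem 0 W.zero_mem).2
  refine ⟨x, W ⊔ span (ZMod 2) {d}, by rw [finrank_sup_span_singleton (mt (@hWU d) hdU), hW], ?_⟩
  rintro _ ⟨_, hw, rfl⟩
  obtain ⟨y, hy, z, hz, rfl⟩ := mem_sup.1 hw
  rcases mem_span_singleton_zmod_two.1 hz with rfl | rfl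
  · simpa using (hmem y hy).1
  · show x + (y + _) ∈ T
    rw [← add_assoc]
    exact hT _ (hmem y hy).1

lemma ncard_eq_two_mul_ncard_inter [Finite V] {U : Submodule (ZMod 2) V} {d : V} (hdU : d ∉ U)
    (hU : U ⊔ span (ZMod 2) {d} = ⊤) {T : Set V} (hT : ∀ x ∈ T, x + d ∈ T) :
    T.ncard = 2 * (T ∩ U).ncard := by
  have hsplit (x : V) : x ∈ U ∨ x + d ∈ U := by
    obtain ⟨u, hu, z, hz, rfl⟩ := mem_sup.1 (hU ▸ mem_top : x ∈ U ⊔ span (ZMod 2) {d})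
    rcases mem_span_singleton_zmod_two.1 hz with rfl | rfl
    · simpa using Or.inl hu
    · rw [add_assoc, ZModModule.add_self, add_zero]
      exact Or.inr hu
  have hcover : T = (T ∩ U) ∪ (· + d) '' (T ∩ U) := by
    refine (Set.union_subset Set.inter_subset_left ?_).antisymm' fun x hx => ?_
    · rintro _ ⟨y, hy, rfl⟩
      exact hT y hy.1
    · rcases hsplit x with hxU | hxU
      · exact Or.inl ⟨hx, hxU⟩
      · refine Or.inr ⟨x + d, ⟨hT x hx, hxU⟩, ?_⟩
        show x + d + d = x
        rw [add_assoc, ZModModule.add_self, add_zero]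
  have hdisj : Disjoint (T ∩ U) ((· + d) '' (T ∩ U)) := by
    refine Set.disjoint_left.2 fun _ hyd ⟨y, hy, hyy⟩ => hdU ?_
    simpa [← hyy] using U.sub_mem hyd.2 hy.2
  calc T.ncard = ((T ∩ U) ∪ (· + d) '' (T ∩ U)).ncard := congrArg _ hcover
    _ = 2 * (T ∩ U).ncard := by
      rw [Set.ncard_union_eq hdisj, Set.ncard_image_of_injective _ (add_left_injective d)]
      ring

end Flats

section Reduction

variable {V : Type*} [AddCommGroup V] [Module (ZMod 2) V] [FiniteDimensional (ZMod 2) V]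

lemma exists_hyperplane_large_subset_lifting_flats [Nontrivial V] (S : Set V) :
    ∃ (U : Submodule (ZMod 2) V) (T : Set U), finrank (ZMod 2) U + 1 = finrank (ZMod 2) V ∧
      S.ncard * S.ncard ≤ S.ncard + 2 ^ (finrank (ZMod 2) V + 1) * T.ncard ∧
      ∀ k, ContainsFlat k T → ContainsFlat (k + 1) S := by
  classical
  have : Fintype V := @Fintype.ofFinite V (Module.finite_of_finite (ZMod 2))
  obtain ⟨d, hd, hcount⟩ := exists_ne_zero_card_mul_card_le S.toFinset
  obtain ⟨U, hUd⟩ := (span (ZMod 2) {d}).exists_isCompl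
  have hdU : d ∉ U := (disjoint_span_singleton' hd).1 hUd.symm.disjoint
  have hU : U ⊔ span (ZMod 2) {d} = ⊤ := hUd.symm.sup_eq_top
  set T : Set V := {x | x ∈ S ∧ x + d ∈ S}
  have hT : ∀ x ∈ T, x + d ∈ T := fun x hx =>
    ⟨hx.2, by rw [add_assoc, ZModModule.add_self, add_zero]; exact hx.1⟩
  have hrank : finrank (ZMod 2) U + 1 = finrank (ZMod 2) V := by
    rw [← finrank_sup_span_singleton hdU, hU, finrank_top]
  have himage : Subtype.val '' (Subtype.val ⁻¹' T : Set U) = T ∩ U :=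
    (Subtype.image_preimage_coe (U : Set V) T).trans (Set.inter_comm _ _)
  refine ⟨U, Subtype.val ⁻¹' T, hrank, ?_, fun k hk => ?_⟩
  · have hTU : (Subtype.val ⁻¹' T : Set U).ncard = (T ∩ U).ncard := by
      rw [← Set.ncard_image_of_injective _ Subtype.val_injective, himage]
    have hTcard : T.ncard = #{x ∈ S.toFinset | x + d ∈ S.toFinset} := by
      rw [← Set.ncard_coe_finset]; congr 1; ext; simp [T]
    rw [← Set.ncard_eq_toFinset_card', ← hTcard, ncard_eq_two_mul_ncard_inter hdU hU hT,
      ← Nat.card_eq_fintype_card, natCard_eq_pow_finrank (K := ZMod 2), Nat.card_zmod] at hcount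
    rw [hTU, pow_succ]
    nlinarith [Nat.sub_le (2 ^ finrank (ZMod 2) V) 1]
  · have hk' := hk.image U.subtype U.injective_subtype
    rw [coe_subtype, himage] at hk'
    exact (hk'.succ_of_inter hdU hT).mono fun x hx => hx.1

end Reduction

lemma one_le_two_rpow_mul_one_sub_one_div_two_pow (n k : ℕ) :
    1 ≤ (2 : ℝ) ^ ((n : ℝ) * (1 - 1 / 2 ^ k)) :=
  Real.one_le_rpow one_le_two <| mul_nonneg n.cast_nonneg <| by
    rw [sub_nonneg]; exact div_le_one_of_le₀ (one_le_pow₀ one_le_two) (by positivity)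

lemma fifteen_div_eight_mul_rpow_le_of_sq_le {n k : ℕ} {m t : ℝ}
    (hm : 5 / 2 * (2 : ℝ) ^ ((n : ℝ) * (1 - 1 / 2 ^ (k + 1))) ≤ m)
    (hmt : m * m ≤ m + 2 ^ (n + 1) * t) :
    15 / 8 * (2 : ℝ) ^ ((n : ℝ) * (1 - 1 / 2 ^ k)) ≤ t := by
  set A := (2 : ℝ) ^ ((n : ℝ) * (1 - 1 / 2 ^ (k + 1)))
  set B := (2 : ℝ) ^ ((n : ℝ) * (1 - 1 / 2 ^ k))
  have hA : 1 ≤ A := one_le_two_rpow_mul_one_sub_one_div_two_pow n (k + 1)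
  have hAB : A * A = 2 ^ n * B := by
    rw [← Real.rpow_add two_pos, ← Real.rpow_natCast 2 n, ← Real.rpow_add two_pos, pow_succ]
    congr 1
    field_simp
    ring
  have hm' : 5 / 2 ≤ m := by linarith
  have hpos : (0 : ℝ) < 2 ^ (n + 1) := by positivity
  refine le_of_mul_le_mul_left ?_ hpos
  calc 2 ^ (n + 1) * (15 / 8 * B) = 3 / 5 * ((5 / 2 * A) * (5 / 2 * A)) := by
        rw [pow_succ]; linear_combination (-15 / 4 : ℝ) * hAB
    _ ≤ 3 / 5 * (m * m) := by gcongr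
    _ ≤ m * m - m := by nlinarith
    _ ≤ 2 ^ (n + 1) * t := by linarith

lemma five_div_two_mul_rpow_le {n k : ℕ} :
    5 / 2 * (2 : ℝ) ^ ((n : ℝ) * (1 - 1 / 2 ^ (k + 1))) ≤
      15 / 8 * (2 : ℝ) ^ (((n + 1 : ℕ) : ℝ) * (1 - 1 / 2 ^ (k + 1))) := by
  set a : ℝ := 1 - 1 / 2 ^ (k + 1)
  have ha : 1 / 2 ≤ a := by
    have : (1 : ℝ) / 2 ^ (k + 1) ≤ 1 / 2 :=
      one_div_le_one_div_of_le two_pos (le_self_pow₀ one_le_two k.succ_ne_zero)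
    linarith
  have hsqrt : (4 / 3 : ℝ) ≤ 2 ^ a := by
    have h : (2 : ℝ) ^ (1 / 2 : ℝ) * 2 ^ (1 / 2 : ℝ) = 2 := by
      rw [← Real.rpow_add two_pos]; norm_num
    have : (4 / 3 : ℝ) ≤ 2 ^ (1 / 2 : ℝ) := by nlinarith [Real.rpow_nonneg zero_le_two (1 / 2 : ℝ)]
    exact this.trans (Real.rpow_le_rpow_of_exponent_le one_le_two ha)
  have hsplit : (2 : ℝ) ^ (((n + 1 : ℕ) : ℝ) * a) = 2 ^ ((n : ℝ) * a) * 2 ^ a := by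
    rw [← Real.rpow_add two_pos]; push_cast; ring_nf
  rw [hsplit]
  nlinarith [Real.rpow_pos_of_pos two_pos ((n : ℝ) * a)]

universe u

theorem containsFlat_succ_of_le_ncard (k : ℕ) :
    ∀ (V : Type u) [AddCommGroup V] [Module (ZMod 2) V] [FiniteDimensional (ZMod 2) V] (S : Set V),
      5 / 2 * (2 : ℝ) ^ ((finrank (ZMod 2) V : ℝ) * (1 - 1 / 2 ^ k)) ≤ S.ncard →
        ContainsFlat (k + 1) S := by
  induction k with
  | zero =>
    intro V _ _ _ S hS
    refine containsFlat_one_of_one_lt_ncard ?_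
    norm_num at hS
    exact_mod_cast (show (1 : ℝ) < S.ncard by linarith)
  | succ k ih =>
    intro V _ _ _ S hS
    have hS1 : 1 < S.ncard := by
      have := one_le_two_rpow_mul_one_sub_one_div_two_pow (finrank (ZMod 2) V) (k + 1)
      exact_mod_cast (show (1 : ℝ) < S.ncard by linarith)
    have : Nontrivial V :=
      Set.nontrivial_of_nontrivial (Set.one_lt_ncard_iff_nontrivial_and_finite.1 hS1).1
    obtain ⟨U, T, hrank, hcount, hlift⟩ := exists_hyperplane_large_subset_lifting_flats S
    have hT := fifteen_div_eight_mul_rpow_le_of_sq_le (t := T.ncard) hS (by exact_mod_cast hcount)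
    apply hlift
    rcases k with _ | k
    · refine containsFlat_one_of_one_lt_ncard ?_
      norm_num at hT
      exact_mod_cast (show (1 : ℝ) < T.ncard by linarith)
    · rw [← hrank] at hT
      exact ih U T (five_div_two_mul_rpow_le.trans hT)

theorem stmt_10_general (n k : ℕ) (hk : 1 ≤ k) (S : Set (Fin n → ZMod 2))
    (hS : (5 / 2 : ℝ) * 2 ^ ((n : ℝ) * (1 - 1 / 2 ^ (k - 1))) ≤ (S.ncard : ℝ)) :
    ∃ H : Set (Fin n → ZMod 2), IsFlat n k H ∧ H ⊆ S := by
  obtain ⟨k, rfl⟩ := Nat.exists_eq_add_of_le' hk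
  obtain ⟨x, W, hW, hxW⟩ :=
    containsFlat_succ_of_le_ncard k (Fin n → ZMod 2) S (by simpa [finrank_fin_fun] using hS)
  exact ⟨_, ⟨x, W, hW, rfl⟩, hxW⟩

theorem stmt_10 (n k : ℕ) (hk : 1 ≤ k) (hn : k ≤ n) (S : Set (Fin n → ZMod 2))
    (hS : (5 / 2 : ℝ) * 2 ^ ((n : ℝ) * (1 - 1 / 2 ^ (k - 1))) ≤ (S.ncard : ℝ)) :
    ∃ H : Set (Fin n → ZMod 2), IsFlat n k H ∧ H ⊆ S :=
  stmt_10_general n k hk S hS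
end

section
/- Let h_1, ..., h_α be non-negative reals with Σ h_i = N. Suppose 0 ≤ α' ≤ α is an integer and 0 < M_1 < M are reals. If h_i ≤ M for all i, and h_i > M_1 for at most α' indices i, then Σ h_i² ≤ α'·M² + (N − α'·M)·M_1. -/
theorem stmt_15 (α α' : ℕ) (h : Fin α → ℝ) (N M M₁ : ℝ)
    (hnonneg : ∀ i, 0 ≤ h i) (hsum : ∑ i, h i = N)
    (hα' : α' ≤ α) (hM₁ : 0 < M₁) (hM : M₁ < M)
    (hle : ∀ i, h i ≤ M)
    (hfew : (Finset.univ.filter fun i => M₁ < h i).card ≤ α') :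
    ∑ i, h i ^ 2 ≤ α' * M ^ 2 + (N - α' * M) * M₁ := by
  classical
  set S := Finset.univ.filter fun i => M₁ < h i with hSdef
  have h1 : ∑ i ∈ S, h i ^ 2 ≤ M * ∑ i ∈ S, h i := by
    rw [Finset.mul_sum]
    refine Finset.sum_le_sum fun i _ => ?_
    have := hnonneg i; have := hle i; nlinarith
  have h2 : ∑ i ∈ Sᶜ, h i ^ 2 ≤ M₁ * ∑ i ∈ Sᶜ, h i := by
    rw [Finset.mul_sum]
    refine Finset.sum_le_sum fun i hi => ?_
    have hi' : ¬ M₁ < h i := by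
      have := Finset.mem_compl.mp hi
      simpa [hSdef] using this
    push_neg at hi'
    have := hnonneg i; nlinarith
  have hsplit : ∑ i ∈ S, h i + ∑ i ∈ Sᶜ, h i = N := by
    rw [Finset.sum_add_sum_compl]; exact hsum
  have hsplit2 : ∑ i ∈ S, h i ^ 2 + ∑ i ∈ Sᶜ, h i ^ 2 = ∑ i, h i ^ 2 :=
    Finset.sum_add_sum_compl S _
  have hS1 : ∑ i ∈ S, h i ≤ (S.card : ℝ) * M := by
    have := Finset.sum_le_card_nsmul S h M fun i _ => hle i
    simpa [nsmul_eq_mul] using this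
  have hcard : (S.card : ℝ) ≤ (α' : ℝ) := by exact_mod_cast hfew
  have hS2 : ∑ i ∈ S, h i ≤ (α' : ℝ) * M := by nlinarith
  nlinarith [hsplit, hsplit2, h1, h2, hS2]
end

section
/- Define Ψ(t) = Σ_{i=0}^{t−1} s_2(i), where s_2 is the binary digit sum. Then for any positive integers t_1, ..., t_k with t = t_1 + ... + t_k, we have Ψ(t) ≥ Ψ(t_1) + ... + Ψ(t_k). -/
/-- `Ψ(t) = Σ_{i=0}^{t-1} s₂(i)`. -/
def Psi (t : ℕ) : ℕ := ∑ i ∈ Finset.range t, s2 i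

lemma s2_rec (m : ℕ) (hm : 0 < m) : s2 m = m % 2 + s2 (m / 2) := by
  unfold s2
  rw [Nat.digits_def' (by norm_num : 2 ≤ 2) hm, List.sum_cons]

lemma s2_two_mul (n : ℕ) : s2 (2 * n) = s2 n := by
  rcases Nat.eq_zero_or_pos n with h | h
  · simp [h]
  · rw [s2_rec (2 * n) (by omega)]
    simp [Nat.mul_div_cancel_left, Nat.mul_mod_right]

lemma s2_two_mul_add_one (n : ℕ) : s2 (2 * n + 1) = s2 n + 1 := by
  rw [s2_rec (2 * n + 1) (by omega)]
  have h1 : (2 * n + 1) % 2 = 1 := by omega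
  have h2 : (2 * n + 1) / 2 = n := by omega
  rw [h1, h2]; omega

lemma psi_succ (n : ℕ) : Psi (n + 1) = Psi n + s2 n := Finset.sum_range_succ _ _

lemma psi_two_mul (n : ℕ) : Psi (2 * n) = 2 * Psi n + n := by
  induction n with
  | zero => simp [Psi]
  | succ m ih =>
    have : 2 * (m + 1) = 2 * m + 1 + 1 := by ring
    rw [this, psi_succ, psi_succ, ih, psi_succ, s2_two_mul, s2_two_mul_add_one]
    ring

lemma psi_two_mul_add_one (n : ℕ) : Psi (2 * n + 1) = Psi n + Psi (n + 1) + n := by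
  rw [psi_succ, psi_two_mul, s2_two_mul, psi_succ]; ring

lemma psi_superadd : ∀ n a b : ℕ, a + b ≤ n → Psi a + Psi b + min a b ≤ Psi (a + b) := by
  intro n
  induction n with
  | zero =>
    intro a b h
    have ha : a = 0 := by omega
    have hb : b = 0 := by omega
    simp [ha, hb, Psi]
  | succ m ih =>
    intro a b h
    rcases Nat.eq_zero_or_pos a with ha | ha
    · simp [ha, Psi]
    rcases Nat.eq_zero_or_pos b with hb | hb
    · simp [hb, Psi]
    rcases Nat.even_or_odd a with ⟨x, hx⟩ | ⟨x, hx⟩ <;>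
      rcases Nat.even_or_odd b with ⟨y, hy⟩ | ⟨y, hy⟩
    · -- a = 2x, b = 2y
      have hab : a + b = 2 * (x + y) := by omega
      have h1 := ih x y (by omega)
      rw [hab, psi_two_mul, hx, hy]
      have e1 : x + x = 2 * x := by ring
      have e2 : y + y = 2 * y := by ring
      rw [e1, e2, psi_two_mul, psi_two_mul]
      omega
    · -- a = 2x, b = 2y+1
      have hab : a + b = 2 * (x + y) + 1 := by omega
      have h1 := ih x y (by omega)
      have h2 := ih x (y + 1) (by omega)
      rw [hab, psi_two_mul_add_one, hx, hy]
      have e1 : x + x = 2 * x := by ring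
      have e2 : 2 * y + 1 = 2 * y + 1 := rfl
      rw [e1, psi_two_mul, psi_two_mul_add_one]
      have e3 : x + (y + 1) = x + y + 1 := by ring
      rw [e3] at h2
      omega
    · -- a = 2x+1, b = 2y
      have hab : a + b = 2 * (x + y) + 1 := by omega
      have h1 := ih x y (by omega)
      have h2 := ih (x + 1) y (by omega)
      rw [hab, psi_two_mul_add_one, hx, hy]
      have e2 : y + y = 2 * y := by ring
      rw [e2, psi_two_mul, psi_two_mul_add_one]
      have e3 : x + 1 + y = x + y + 1 := by ring
      rw [e3] at h2
      omega
    · -- a = 2x+1, b = 2y+1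
      have hab : a + b = 2 * (x + y + 1) := by omega
      have h1 := ih x (y + 1) (by omega)
      have h2 := ih (x + 1) y (by omega)
      rw [hab, psi_two_mul, hx, hy, psi_two_mul_add_one, psi_two_mul_add_one]
      have e1 : x + (y + 1) = x + y + 1 := by ring
      have e2 : x + 1 + y = x + y + 1 := by ring
      rw [e1] at h1; rw [e2] at h2
      omega

lemma psi_superadd' (a b : ℕ) : Psi a + Psi b ≤ Psi (a + b) := by
  have := psi_superadd (a + b) a b le_rfl
  omega

theorem stmt_16 (k : ℕ) (t : Fin k → ℕ) (hpos : ∀ i, 0 < t i) :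
    ∑ i, Psi (t i) ≤ Psi (∑ i, t i) := by
  induction k with
  | zero => simp [Psi]
  | succ m ih =>
    rw [Fin.sum_univ_succ, Fin.sum_univ_succ]
    calc Psi (t 0) + ∑ i : Fin m, Psi (t i.succ)
        ≤ Psi (t 0) + Psi (∑ i : Fin m, t i.succ) := by
          exact Nat.add_le_add_left
            (by simpa using ih (fun i => t i.succ) (fun i => hpos i.succ)) _
      _ ≤ Psi (t 0 + ∑ i : Fin m, t i.succ) := psi_superadd' _ _
end
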